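/- (Determinant identity, case N = 2.) For arbitrary complex numbers λ₁, λ₂, μ₁, μ₂, η, κ such that all the functions below are defined (nonvanishing sinh denominators, and sinh(λ₁−λ₂±η) ≠ 0, sinh(μ₁−μ₂±η) ≠ 0), the 2×2 determinants of the matrices G̃_{jk} = t(μₖ,λⱼ)·Π_{a=1}^{2} h(μ_a,λⱼ) + κ·t(λⱼ,μₖ)·Π_{a=1}^{2} h(λⱼ,μ_a)·Π_{a=1}^{2} [h(λ_a,λⱼ)/h(λⱼ,λ_a)] and Ĝ_{jk} = t(μₖ,λⱼ)·Π_{a=1}^{2} h(μₖ,λ_a) + κ·t(λⱼ,μₖ)·Π_{a=1}^{2} h(λ_a,μₖ)·Π_{a=1}^{2} [h(μₖ,μ_a)/h(μ_a,μₖ)] are equal: det G̃ = det Ĝ. -/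

import Mathlib

open Complex

/-- `h(λ,μ) = sinh(λ-μ+η)`. -/
noncomputable def hfun (η lam mu : ℂ) : ℂ := Complex.sinh (lam - mu + η)

/-- `t(λ,μ) = sinh η / (sinh(λ-μ) · h(λ,μ))`. -/
noncomputable def tfun (η lam mu : ℂ) : ℂ :=
  Complex.sinh η / (Complex.sinh (lam - mu) * hfun η lam mu)

/-!
The factor `a = k` (resp. `a = j`) of the first product in each entry cancels against the
`h` in the denominator of `t(μₖ,λⱼ)`, and likewise for the `κ`-term, so both matrices are the
Cauchy-type weights `sinh η / sinh(μₖ - λⱼ)` times reduced matrices built from the remaining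
factors. For `N = 2` the equality of the two determinants then amounts to a single identity
between products of hyperbolic sines, which becomes a Laurent-polynomial identity in the
exponentials of `λ`, `μ` and `η`.
-/

open Finset Matrix

section Matrices

variable {n : Type*} [Fintype n] [DecidableEq n] (η κ : ℂ) (lam mu : n → ℂ)

noncomputable def gTilde : Matrix n n ℂ := of fun j k =>
  tfun η (mu k) (lam j) * (∏ a, hfun η (mu a) (lam j))
    + κ * tfun η (lam j) (mu k) * (∏ a, hfun η (lam j) (mu a)) *
      (∏ a, hfun η (lam a) (lam j) / hfun η (lam j) (lam a))

noncomputable def gHat : Matrix n n ℂ := of fun j k =>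
  tfun η (mu k) (lam j) * (∏ a, hfun η (mu k) (lam a))
    + κ * tfun η (lam j) (mu k) * (∏ a, hfun η (lam a) (mu k)) *
      (∏ a, hfun η (mu k) (mu a) / hfun η (mu a) (mu k))

noncomputable def gTildeReduced : Matrix n n ℂ := of fun j k =>
  ∏ a ∈ univ.erase k, hfun η (mu a) (lam j)
    - κ * (∏ a ∈ univ.erase k, hfun η (lam j) (mu a)) *
      ∏ a ∈ univ.erase j, hfun η (lam a) (lam j) / hfun η (lam j) (lam a)

noncomputable def gHatReduced : Matrix n n ℂ := of fun j k =>
  ∏ a ∈ univ.erase j, hfun η (mu k) (lam a)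
    - κ * (∏ a ∈ univ.erase j, hfun η (lam a) (mu k)) *
      ∏ a ∈ univ.erase k, hfun η (mu k) (mu a) / hfun η (mu a) (mu k)

end Matrices

lemma sinh_sub_comm (x y : ℂ) : sinh (x - y) = -sinh (y - x) := by
  rw [← sinh_neg, neg_sub]

lemma hfun_eq_neg_sinh (η x y : ℂ) : hfun η x y = -sinh (y - x - η) := by
  rw [hfun, ← sinh_neg]
  ring_nf

lemma hfun_self (η x : ℂ) : hfun η x x = sinh η := by
  rw [hfun, sub_self, zero_add]

lemma tfun_mul_hfun {η x y : ℂ} (h : hfun η x y ≠ 0) :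
    tfun η x y * hfun η x y = sinh η / sinh (x - y) := by
  rw [tfun]
  field_simp

section Reduction

variable {n : Type*} [Fintype n] [DecidableEq n] {η : ℂ} (κ : ℂ) {lam mu : n → ℂ}

lemma gTilde_eq_weighted (hη : sinh η ≠ 0) (hml : ∀ j k, hfun η (mu k) (lam j) ≠ 0)
    (hlm : ∀ j k, hfun η (lam j) (mu k) ≠ 0) :
    gTilde η κ lam mu =
      of fun j k => sinh η / sinh (mu k - lam j) * gTildeReduced η κ lam mu j k := by
  ext j k
  rw [gTilde, gTildeReduced, of_apply, of_apply, of_apply,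
    ← mul_prod_erase _ _ (mem_univ k), ← mul_prod_erase _ _ (mem_univ k),
    ← mul_prod_erase _ _ (mem_univ j), ← mul_assoc, tfun_mul_hfun (hml j k),
    hfun_self, div_self hη, one_mul, mul_assoc κ, ← mul_assoc (tfun _ _ _),
    tfun_mul_hfun (hlm j k), sinh_sub_comm (lam j)]
  ring

lemma gHat_eq_weighted (hη : sinh η ≠ 0) (hml : ∀ j k, hfun η (mu k) (lam j) ≠ 0)
    (hlm : ∀ j k, hfun η (lam j) (mu k) ≠ 0) :
    gHat η κ lam mu =
      of fun j k => sinh η / sinh (mu k - lam j) * gHatReduced η κ lam mu j k := by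
  ext j k
  rw [gHat, gHatReduced, of_apply, of_apply, of_apply,
    ← mul_prod_erase _ _ (mem_univ j), ← mul_prod_erase _ _ (mem_univ j),
    ← mul_prod_erase _ _ (mem_univ k), ← mul_assoc, tfun_mul_hfun (hml j k),
    hfun_self, div_self hη, one_mul, mul_assoc κ, ← mul_assoc (tfun _ _ _),
    tfun_mul_hfun (hlm j k), sinh_sub_comm (lam j)]
  ring

end Reduction

lemma det_fin_two_cauchy_weighted_eq {c : ℂ} {lam mu : Fin 2 → ℂ}
    {A B : Matrix (Fin 2) (Fin 2) ℂ} (hs : ∀ j k, sinh (mu k - lam j) ≠ 0)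
    (hAB : sinh (mu 1 - lam 0) * sinh (mu 0 - lam 1) * (A 0 0 * A 1 1 - B 0 0 * B 1 1)
      = sinh (mu 0 - lam 0) * sinh (mu 1 - lam 1) * (A 0 1 * A 1 0 - B 0 1 * B 1 0)) :
    det (of fun j k => c / sinh (mu k - lam j) * A j k)
      = det (of fun j k => c / sinh (mu k - lam j) * B j k) := by
  have := hs 0 0; have := hs 0 1; have := hs 1 0; have := hs 1 1
  simp only [det_fin_two, of_apply]
  field_simp
  linear_combination c ^ 2 * hAB

lemma gReduced_cross_identity (η κ : ℂ) (lam mu : Fin 2 → ℂ)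
    (hl01 : hfun η (lam 0) (lam 1) ≠ 0) (hl10 : hfun η (lam 1) (lam 0) ≠ 0)
    (hm01 : hfun η (mu 0) (mu 1) ≠ 0) (hm10 : hfun η (mu 1) (mu 0) ≠ 0) :
    let T := gTildeReduced η κ lam mu
    let H := gHatReduced η κ lam mu
    sinh (mu 1 - lam 0) * sinh (mu 0 - lam 1) * (T 0 0 * T 1 1 - H 0 0 * H 1 1)
      = sinh (mu 0 - lam 0) * sinh (mu 1 - lam 1) * (T 0 1 * T 1 0 - H 0 1 * H 1 0) := by
  have erase_zero : (univ : Finset (Fin 2)).erase 0 = {1} := by decide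
  have erase_one : (univ : Finset (Fin 2)).erase 1 = {0} := by decide
  simp only [gTildeReduced, gHatReduced, of_apply, erase_zero, erase_one, prod_singleton]
  field_simp
  simp only [hfun, Complex.sinh, exp_neg, exp_add, exp_sub]
  field_simp
  ring

/-- Determinant identity `det G̃ = det Ĝ` in the case `N = 2`. -/
theorem det_identity_N2 (η κ : ℂ) (lam mu : Fin 2 → ℂ)
    (h1 : ∀ j k : Fin 2, Complex.sinh (lam j - mu k) ≠ 0 ∧
      Complex.sinh (lam j - mu k + η) ≠ 0 ∧ Complex.sinh (lam j - mu k - η) ≠ 0)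
    (h2 : Complex.sinh (lam 0 - lam 1 + η) ≠ 0)
    (h3 : Complex.sinh (lam 0 - lam 1 - η) ≠ 0)
    (h4 : Complex.sinh (mu 0 - mu 1 + η) ≠ 0)
    (h5 : Complex.sinh (mu 0 - mu 1 - η) ≠ 0) :
    Matrix.det (Matrix.of fun j k : Fin 2 =>
        tfun η (mu k) (lam j) * (∏ a : Fin 2, hfun η (mu a) (lam j))
          + κ * tfun η (lam j) (mu k) * (∏ a : Fin 2, hfun η (lam j) (mu a)) *
            (∏ a : Fin 2, hfun η (lam a) (lam j) / hfun η (lam j) (lam a)))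
      = Matrix.det (Matrix.of fun j k : Fin 2 =>
        tfun η (mu k) (lam j) * (∏ a : Fin 2, hfun η (mu k) (lam a))
          + κ * tfun η (lam j) (mu k) * (∏ a : Fin 2, hfun η (lam a) (mu k)) *
            (∏ a : Fin 2, hfun η (mu k) (mu a) / hfun η (mu a) (mu k))) := by
  change (gTilde η κ lam mu).det = (gHat η κ lam mu).det
  rcases eq_or_ne (sinh η) 0 with hη | hη
  · simp [gTilde, gHat, det_fin_two, tfun, hη]
  have hml j k : hfun η (mu k) (lam j) ≠ 0 := by
    simpa [hfun_eq_neg_sinh] using (h1 j k).2.2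
  have hlm j k : hfun η (lam j) (mu k) ≠ 0 := (h1 j k).2.1
  have hs j k : sinh (mu k - lam j) ≠ 0 := by
    simpa [sinh_sub_comm (mu k)] using (h1 j k).1
  have hl10 : hfun η (lam 1) (lam 0) ≠ 0 := by simpa [hfun_eq_neg_sinh] using h3
  have hm10 : hfun η (mu 1) (mu 0) ≠ 0 := by simpa [hfun_eq_neg_sinh] using h5
  rw [gTilde_eq_weighted κ hη hml hlm, gHat_eq_weighted κ hη hml hlm]
  exact det_fin_two_cauchy_weighted_eq hs (gReduced_cross_identity η κ lam mu h2 hl10 h4 hm10)
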